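/- arXiv:2105.08143 — 6 statements merged into one kernel-verified Lean document; each statement's English description precedes it below -/
import Mathlib

section
/- If K is a closed set containing OPT(Q_V) and K ∩ Q_crit = ∅, then for every viable state s, OPT(K)(s) = OPT(Q_V)(s). (Sufficiency direction of the admissible constraint theorem.) -/
open Set

/-- Projection of a set of state-action pairs into state space. -/
def proj {S A : Type*} (K : Set (S × A)) : Set S := {s | ∃ a, (s, a) ∈ K}

/-- Set of minimizers of `J s ·` over the slice of `K` at `s`. -/
def OPT {S A : Type*} (J : S → A → ℝ) (K : Set (S × A)) (s : S) : Set A :=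
  {a | (s, a) ∈ K ∧ ∀ b, (s, b) ∈ K → J s a ≤ J s b}

/-- `OPT J K` viewed as a set of state-action pairs. -/
def OPTset {S A : Type*} (J : S → A → ℝ) (K : Set (S × A)) : Set (S × A) :=
  {p | p.2 ∈ OPT J K p.1}

/-- The critical set: unviable state-actions in `Q` at viable states achieving cost
no larger than the minimal viable cost. -/
def Qcrit {S A : Type*} (J : S → A → ℝ) (Q QV : Set (S × A)) : Set (S × A) :=
  {p | p ∈ Q \ QV ∧ p.1 ∈ proj QV ∧ ∀ b, (p.1, b) ∈ QV → J p.1 p.2 ≤ J p.1 b}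

theorem admissible_sufficient {n m : ℕ}
    (SF : Set (EuclideanSpace ℝ (Fin n)))
    (J : EuclideanSpace ℝ (Fin n) → EuclideanSpace ℝ (Fin m) → ℝ)
    (QV K : Set (EuclideanSpace ℝ (Fin n) × EuclideanSpace ℝ (Fin m)))
    (hQV : ∀ p ∈ QV, p.1 ∉ SF) (hKQ : ∀ p ∈ K, p.1 ∉ SF)
    (hKclosed : IsClosed K)
    (hne : ∀ s ∈ proj QV, (OPT J QV s).Nonempty)
    (hsub : OPTset J QV ⊆ K)
    (hdisj : K ∩ Qcrit J {p | p.1 ∉ SF} QV = ∅) :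
    ∀ s ∈ proj QV, OPT J K s = OPT J QV s := by
  intro s hs
  obtain ⟨astar, hastar⟩ := hne s hs
  have hKstar : (s, astar) ∈ K := hsub hastar
  have hdisj' : ∀ p, p ∈ K → p ∉ Qcrit J {p | p.1 ∉ SF} QV := by
    intro p hp hq
    have : p ∈ K ∩ Qcrit J {p | p.1 ∉ SF} QV := ⟨hp, hq⟩
    rw [hdisj] at this; exact this
  ext a
  constructor
  · rintro ⟨haK, hopt⟩
    have hle : J s a ≤ J s astar := hopt astar hKstar
    have haQV : (s, a) ∈ QV := by
      by_contra hnot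
      exact hdisj' (s, a) haK ⟨⟨hKQ _ haK, hnot⟩, hs,
        fun b hb => le_trans hle (hastar.2 b hb)⟩
    exact ⟨haQV, fun b hb => le_trans hle (hastar.2 b hb)⟩
  · rintro ⟨haQV, hopt⟩
    have haK : (s, a) ∈ K := hsub ⟨haQV, hopt⟩
    refine ⟨haK, fun b hb => ?_⟩
    by_contra hlt
    push_neg at hlt
    by_cases hbQV : (s, b) ∈ QV
    · exact absurd (hopt b hbQV) (not_le.mpr hlt)
    · exact hdisj' (s, b) hb ⟨⟨hKQ _ hb, hbQV⟩, hs,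
        fun c hc => le_trans hlt.le (hopt c hc)⟩
end

section
/- If K is a closed set containing OPT(Q_V) and OPT(K)(s) = OPT(Q_V)(s) for all s ∈ S_V, then K ∩ Q_crit = ∅. (Necessity direction of the admissible constraint theorem.) -/
open Set

theorem admissible_necessary {n m : ℕ}
    (SF : Set (EuclideanSpace ℝ (Fin n)))
    (J : EuclideanSpace ℝ (Fin n) → EuclideanSpace ℝ (Fin m) → ℝ)
    (QV K : Set (EuclideanSpace ℝ (Fin n) × EuclideanSpace ℝ (Fin m)))
    (hQV : ∀ p ∈ QV, p.1 ∉ SF) (hKQ : ∀ p ∈ K, p.1 ∉ SF)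
    (hKclosed : IsClosed K)
    (hne : ∀ s ∈ proj QV, (OPT J QV s).Nonempty)
    (hsub : OPTset J QV ⊆ K)
    (heq : ∀ s ∈ proj QV, OPT J K s = OPT J QV s) :
    K ∩ Qcrit J {p | p.1 ∉ SF} QV = ∅ := by
  ext p
  simp only [mem_inter_iff, mem_empty_iff_false, iff_false]
  rintro ⟨hpK, ⟨-, hpQV⟩, hsv, hmin⟩
  obtain ⟨a, haQV⟩ := hne p.1 hsv
  have haK : a ∈ OPT J K p.1 := (heq p.1 hsv).symm ▸ haQV
  have h1 : J p.1 a ≤ J p.1 p.2 := haK.2 p.2 hpK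
  have h2 : J p.1 p.2 ≤ J p.1 a := hmin a haQV.1
  have : p.2 ∈ OPT J K p.1 := ⟨hpK, fun b hb => le_trans h2 (haK.2 b hb)⟩
  rw [heq p.1 hsv] at this
  exact hpQV this.1
end

section
/- Let K be a set with OPT(Q_V) ⊆ K and K ∩ Q_crit = ∅. For s ∈ S_V, every minimizer a ∈ OPT(K)(s) satisfies (s,a) ∈ Q_V and J(s,a) = min_{b : (s,b) ∈ Q_V} J(s,b). In particular, any action chosen by OPT(K) at a viable state is viable. -/
open Set

theorem optK_viable {S A : Type*} (SF : Set S) (J : S → A → ℝ)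
    (QV K : Set (S × A))
    (hQV : ∀ p ∈ QV, p.1 ∉ SF) (hKQ : ∀ p ∈ K, p.1 ∉ SF)
    (hne : ∀ s ∈ proj QV, (OPT J QV s).Nonempty)
    (hsub : OPTset J QV ⊆ K)
    (hdisj : K ∩ Qcrit J {p | p.1 ∉ SF} QV = ∅) :
    ∀ s ∈ proj QV, ∀ a ∈ OPT J K s,
      (s, a) ∈ QV ∧ ∀ b, (s, b) ∈ QV → J s a ≤ J s b := by
  intro s hs a ha
  obtain ⟨av, havQV, havmin⟩ := hne s hs
  have havK : (s, av) ∈ K := hsub ⟨havQV, havmin⟩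
  obtain ⟨haK, hamin⟩ := ha
  have hle : ∀ b, (s, b) ∈ QV → J s a ≤ J s b := fun b hb =>
    le_trans (hamin av havK) (havmin b hb)
  have haQV : (s, a) ∈ QV := by
    by_contra h
    have : (s, a) ∈ K ∩ Qcrit J {p : S × A | p.1 ∉ SF} QV :=
      ⟨haK, ⟨⟨hKQ _ haK, h⟩, hs, hle⟩⟩
    rw [hdisj] at this
    exact this
  exact ⟨haQV, hle⟩
end

section
/- The set Q_safe of state-actions that start infinite failure-avoiding trajectories equals the maximal control constraint Q_V (the union of all control constraints). -/
open Set

/-- `K` is a control constraint for dynamics `T` and failure set `SF`: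
`K ⊆ (S \ S_F) × A` and every state-action in `K` maps back into `proj K`. -/
def IsCC {S A : Type*} (T : S → A → S) (SF : Set S) (K : Set (S × A)) : Prop :=
  (∀ p ∈ K, p.1 ∉ SF) ∧ ∀ p ∈ K, T p.1 p.2 ∈ proj K

/-- State-actions from which failure can be avoided forever. -/
def Qsafe {S A : Type*} (T : S → A → S) (SF : Set S) : Set (S × A) :=
  {p | ∃ (σ : ℕ → S) (α : ℕ → A), σ 0 = p.1 ∧ α 0 = p.2 ∧
    (∀ k, σ (k + 1) = T (σ k) (α k)) ∧ ∀ k, σ k ∉ SF}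

theorem Qsafe_eq_viableSet {S A : Type*} (T : S → A → S) (SF : Set S) :
    Qsafe T SF = ⋃₀ {K : Set (S × A) | IsCC T SF K} := by
  apply Set.Subset.antisymm
  · intro p hp
    refine ⟨Qsafe T SF, ?_, hp⟩
    constructor
    · rintro q ⟨σ, α, h0, ha0, hstep, hsafe⟩
      rw [← h0]; exact hsafe 0
    · rintro q ⟨σ, α, h0, ha0, hstep, hsafe⟩
      refine ⟨α 1, fun n => σ (n + 1), fun n => α (n + 1), ?_, rfl,
        fun k => hstep (k + 1), fun k => hsafe (k + 1)⟩
      simp [hstep 0, h0, ha0]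
  · rintro p ⟨K, hK, hpK⟩
    obtain ⟨hK1, hK2⟩ := hK
    choose g hg using fun (q : S × A) (h : q ∈ K) => hK2 q h
    let F : {q // q ∈ K} → {q // q ∈ K} :=
      fun q => ⟨(T q.1.1 q.1.2, g q.1 q.2), hg q.1 q.2⟩
    let seq : ℕ → {q // q ∈ K} := fun n => F^[n] ⟨p, hpK⟩
    refine ⟨fun n => (seq n).1.1, fun n => (seq n).1.2, rfl, rfl, ?_, ?_⟩
    · intro k
      have h : seq (k + 1) = F (seq k) := Function.iterate_succ_apply' F k _
      show ((seq (k + 1) : S × A)).1 = T ((seq k : S × A)).1 ((seq k : S × A)).2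
      rw [h]
    · intro k; exact hK1 _ (seq k).2
end

section
/- If K is an admissible constraint (OPT(Q_V) ⊆ K, K ∩ Q_crit = ∅) and π_K is any selection with π_K(s) ∈ OPT(K)(s) for s ∈ S_V, then the closed-loop trajectory s_{k+1} = T(s_k, π_K(s_k)) starting from any s_0 ∈ S_V remains in S_V forever and never enters S_F. -/
open Set

theorem admissible_closed_loop_safe {S A : Type*} (T : S → A → S) (SF : Set S)
    (J : S → A → ℝ) (QV K : Set (S × A))
    (hQV : ∀ p ∈ QV, p.1 ∉ SF)
    (hinv : ∀ p ∈ QV, T p.1 p.2 ∈ proj QV)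
    (hne : ∀ s ∈ proj QV, (OPT J QV s).Nonempty)
    (hsub : OPTset J QV ⊆ K)
    (hdisj : K ∩ Qcrit J {p | p.1 ∉ SF} QV = ∅)
    (πK : S → A) (hπK : ∀ s ∈ proj QV, πK s ∈ OPT J K s)
    (traj : ℕ → S) (s₀ : S) (h₀ : traj 0 = s₀) (hs₀ : s₀ ∈ proj QV)
    (hstep : ∀ k, traj (k + 1) = T (traj k) (πK (traj k))) :
    ∀ k, traj k ∈ proj QV ∧ traj k ∉ SF := by
  have key : ∀ s ∈ proj QV, (s, πK s) ∈ QV := by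
    intro s hs
    obtain ⟨a, ha⟩ := hne s hs
    have haK : (s, a) ∈ K := hsub ha
    obtain ⟨hπKmem, hπKopt⟩ := hπK s hs
    by_contra hnot
    have hsnF : s ∉ SF := by
      obtain ⟨a', ha'⟩ := hs
      exact hQV (s, a') ha'
    have hcrit : (s, πK s) ∈ Qcrit J {p | p.1 ∉ SF} QV := by
      refine ⟨⟨hsnF, hnot⟩, hs, fun b hb => ?_⟩
      exact le_trans (hπKopt a haK) (ha.2 b hb)
    have : (s, πK s) ∈ K ∩ Qcrit J {p | p.1 ∉ SF} QV := ⟨hπKmem, hcrit⟩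
    rw [hdisj] at this
    exact this
  intro k
  induction k with
  | zero =>
    have h : traj 0 ∈ proj QV := h₀ ▸ hs₀
    obtain ⟨a, ha⟩ := id h
    exact ⟨h, hQV (traj 0, a) ha⟩
  | succ n ih =>
    have hQVmem := key (traj n) ih.1
    have h : traj (n + 1) ∈ proj QV := by
      rw [hstep n]; exact hinv (traj n, πK (traj n)) hQVmem
    obtain ⟨a, ha⟩ := id h
    exact ⟨h, hQV (traj (n+1), a) ha⟩
end

section
/- Removing the critical set from any superset of the viable set preserves the optimal constrained policy: if Q_V ⊆ K and K' = K \ Q_crit, then OPT(K')(s) = OPT(Q_V)(s) for all s ∈ S_V (assuming the relevant argmins are nonempty). -/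
open Set

theorem remove_critical_preserves_policy {S A : Type*} (SF : Set S) (J : S → A → ℝ)
    (QV K : Set (S × A))
    (hQV : ∀ p ∈ QV, p.1 ∉ SF) (hKQ : ∀ p ∈ K, p.1 ∉ SF)
    (hQVK : QV ⊆ K)
    (hne : ∀ s ∈ proj QV, (OPT J QV s).Nonempty) :
    ∀ s ∈ proj QV,
      OPT J (K \ Qcrit J {p | p.1 ∉ SF} QV) s = OPT J QV s := by
  intro s hs
  -- a ∈ OPT QV s implies (s,a) ∈ K' and optimal over K'
  have hKey : ∀ a ∈ OPT J QV s,
      (s, a) ∈ K \ Qcrit J {p : S × A | p.1 ∉ SF} QV ∧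
      ∀ b, (s, b) ∈ K \ Qcrit J {p : S × A | p.1 ∉ SF} QV → J s a ≤ J s b := by
    intro a ⟨haQV, hmin⟩
    refine ⟨⟨hQVK haQV, fun hc => hc.1.2 haQV⟩, ?_⟩
    intro b ⟨hbK, hbnc⟩
    by_cases hbQV : (s, b) ∈ QV
    · exact hmin b hbQV
    · have : ¬ ∀ c, (s, c) ∈ QV → J s b ≤ J s c := by
        intro h
        exact hbnc ⟨⟨hKQ _ hbK, hbQV⟩, hs, h⟩
      push_neg at this
      obtain ⟨c, hcQV, hc⟩ := this
      exact le_of_lt (lt_of_le_of_lt (hmin c hcQV) hc)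
  ext a
  constructor
  · rintro ⟨⟨haK, hanc⟩, hmin⟩
    by_cases haQV : (s, a) ∈ QV
    · refine ⟨haQV, fun b hb => ?_⟩
      exact hmin b ⟨hQVK hb, fun hc => hc.1.2 hb⟩
    · exfalso
      have : ¬ ∀ c, (s, c) ∈ QV → J s a ≤ J s c := by
        intro h
        exact hanc ⟨⟨hKQ _ haK, haQV⟩, hs, h⟩
      push_neg at this
      obtain ⟨c, hcQV, hc⟩ := this
      obtain ⟨astar, hstar⟩ := hne s hs
      have h1 := hmin astar (hKey astar hstar).1
      have h2 := hstar.2 c hcQV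
      linarith
  · intro ha
    exact ⟨(hKey a ha).1, (hKey a ha).2⟩
end
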